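/- Let p be a nonzero Laurent polynomial in z₁,…,z_d over ℂ, let 𝒮 be a collection of proper subsets of W with constants C_X ∈ ℂ, let 𝒫̃(z,λ) = ∏_{n∈W}(p(μ_n⊙z) − λ) + Σ_{X∈𝒮} C_X ∏_{n∈X}(p(μ_n⊙z) − λ) be invariant (𝒫̃(μ_n⊙z,λ) = 𝒫̃(z,λ) for all n ∈ W), and let 𝒫(w,λ) be a Laurent polynomial with 𝒫(z₁^{q₁},…,z_d^{q_d},λ) = 𝒫̃(z,λ). For j = 1,…,d define γ_j ≥ 0 by: −γ_j is the lowest exponent of z_j occurring in p if that exponent is negative, and γ_j = 0 otherwise (note γ_j Q/q_j ∈ ℤ). Then ℛ(w,λ̃) := λ̃^Q · w₁^{γ₁Q/q₁}⋯w_d^{γ_dQ/q_d} · 𝒫(w,λ̃^{−1}) is an ordinary polynomial in ℂ[w₁,…,w_d,λ̃], λ̃ does not divide ℛ, and for each 1 ≤ j ≤ d the variable w_j does not divide ℛ. -/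

import Mathlib

open scoped BigOperators
open Complex

noncomputable section

/-- Laurent polynomials in `z₁,…,z_d` over `ℂ`, encoded as the group algebra of `ℤ^d`. -/
abbrev LMv (d : ℕ) : Type := AddMonoidAlgebra ℂ (Fin d →₀ ℤ)

/-- Laurent polynomials in `z₁,…,z_d` and `λ` over `ℂ`. -/
abbrev LMvF (d : ℕ) : Type := AddMonoidAlgebra ℂ ((Fin d →₀ ℤ) × ℤ)

/-- `e^{2πin/q}`. -/
def muC (q : ℕ) (n : ℤ) : ℂ := Complex.exp (2 * Real.pi * Complex.I * n / q)

/-- The vector `μ_n = (e^{2πin₁/q₁},…,e^{2πin_d/q_d})`. -/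
def muV {d : ℕ} (q : Fin d → ℕ) (n : Fin d → ℤ) : Fin d → ℂ := fun j => muC (q j) (n j)

/-- Substitution `z_j ↦ c_j z_j` in a Laurent polynomial in `z`. -/
def scaleZ {d : ℕ} (c : Fin d → ℂ) (p : LMv d) : LMv d :=
  AddMonoidAlgebra.ofCoeff (Finsupp.sum p.coeff fun α a => Finsupp.single α ((∏ j, c j ^ (α j)) * a))

/-- Substitution `z_j ↦ c_j z_j` in a Laurent polynomial in `(z, λ)` (leaving `λ` alone). -/
def scaleZF {d : ℕ} (c : Fin d → ℂ) (P : LMvF d) : LMvF d :=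
  AddMonoidAlgebra.ofCoeff (Finsupp.sum P.coeff fun β a => Finsupp.single β ((∏ j, c j ^ (β.1 j)) * a))

/-- Total degree `α₁ + ⋯ + α_d` of a monomial exponent. -/
def degS {d : ℕ} (α : Fin d →₀ ℤ) : ℤ := ∑ j, α j

/-- `L₋`, the minimal total degree of a (nonzero) Laurent polynomial. -/
def lowDeg {d : ℕ} (p : LMv d) : ℤ := WithTop.untopD 0 ((Finsupp.support p.coeff).image degS).min

/-- The lowest degree component of a Laurent polynomial. -/
def lowComp {d : ℕ} (p : LMv d) : LMv d :=
  AddMonoidAlgebra.ofCoeff (Finsupp.filter (fun α => degS α = lowDeg p) p.coeff)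

/-- The fundamental cell `W = {n ∈ ℤ^d : 0 ≤ n_j ≤ q_j - 1}`. -/
def Wcell {d : ℕ} (q : Fin d → ℕ) : Finset (Fin d → ℤ) :=
  Fintype.piFinset fun j => (Finset.range (q j)).image (fun k : ℕ => (k : ℤ))

/-- The canonical embedding of Laurent polynomials in `z` into Laurent polynomials in `(z,λ)`. -/
def embedZ {d : ℕ} (p : LMv d) : LMvF d := AddMonoidAlgebra.ofCoeff (Finsupp.mapDomain (fun α => (α, (0:ℤ))) p.coeff)

/-- The variable `λ`. -/
def lamF (d : ℕ) : LMvF d := AddMonoidAlgebra.ofCoeff (Finsupp.single ((0 : Fin d →₀ ℤ), (1:ℤ)) (1:ℂ))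

/-- Exponent stretching `α ↦ (q₁α₁,…,q_dα_d)`. -/
def stretchE {d : ℕ} (q : Fin d → ℕ) (α : Fin d →₀ ℤ) : Fin d →₀ ℤ :=
  Finsupp.sum α fun j a => Finsupp.single j ((q j : ℤ) * a)

/-- The substitution `𝒫(w,λ) ↦ 𝒫(z₁^{q₁},…,z_d^{q_d},λ)`. -/
def stretchF {d : ℕ} (q : Fin d → ℕ) (P : LMvF d) : LMvF d :=
  AddMonoidAlgebra.ofCoeff (Finsupp.mapDomain (fun β => (stretchE q β.1, β.2)) P.coeff)

/-- Assumption (A₂): the Laurent polynomials `h(μ_n ⊙ z)`, `n ∈ W`, are pairwise distinct. -/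
def PairwiseDistinctH {d : ℕ} (q : Fin d → ℕ) (h : LMv d) : Prop :=
  ∀ n ∈ Wcell q, ∀ n' ∈ Wcell q, n ≠ n' → scaleZ (muV q n) h ≠ scaleZ (muV q n') h

/-- The polynomial `𝒫̃(z,λ) = ∏_{n∈W}(p(μ_n⊙z) − λ) + Σ_{X∈𝒮} C_X ∏_{n∈X}(p(μ_n⊙z) − λ)`. -/
def Ptilde {d : ℕ} (q : Fin d → ℕ) (p : LMv d)
    (S : Finset (Finset (Fin d → ℤ))) (C : Finset (Fin d → ℤ) → ℂ) : LMvF d :=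
  (∏ n ∈ Wcell q, (embedZ (scaleZ (muV q n) p) - lamF d))
    + ∑ X ∈ S, C X • ∏ n ∈ X, (embedZ (scaleZ (muV q n) p) - lamF d)
/-- The symbol `p(z) = Σ_n a_n z^{-n}` of a finite-range Toeplitz operator. -/
def symbA {d : ℕ} (a : (Fin d → ℤ) →₀ ℂ) : LMv d :=
  Finsupp.sum a fun n c => AddMonoidAlgebra.ofCoeff (Finsupp.single (-(Finsupp.equivFunOnFinite.symm n)) c)

/-- `V` is `q`-periodic. -/
def IsPeriodic {d : ℕ} (q : Fin d → ℕ) (V : (Fin d → ℤ) → ℂ) : Prop :=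
  ∀ (n : Fin d → ℤ) (j : Fin d), V (n + (q j : ℤ) • Pi.single j 1) = V n

/-- The discrete Fourier transform `V̂_ℓ = Q^{-1/2} Σ_{m∈W} e^{-2πi⟨m,ℓ⟩} V_m`. -/
def Vhat {d : ℕ} (q : Fin d → ℕ) (V : (Fin d → ℤ) → ℂ) (l : Fin d → ℝ) : ℂ :=
  ((1 / Real.sqrt (∏ j, (q j : ℝ)) : ℝ) : ℂ) *
    ∑ m ∈ Wcell q, Complex.exp (-(2 * Real.pi * Complex.I) *
      ((∑ j, (m j : ℝ) * l j : ℝ) : ℂ)) * V m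

/-- The diagonal matrix `D^z` with entries `p(μ_n ⊙ z)`, as Laurent polynomials. -/
def Dmat {d : ℕ} (q : Fin d → ℕ) (p : LMv d) :
    Matrix {n // n ∈ Wcell q} {n // n ∈ Wcell q} (LMvF d) :=
  Matrix.diagonal fun n => embedZ (scaleZ (muV q n.1) p)

/-- The constant matrix `B` with entries `V̂((n-n')/q)`. -/
def Bmat {d : ℕ} (q : Fin d → ℕ) (V : (Fin d → ℤ) → ℂ) :
    Matrix {n // n ∈ Wcell q} {n // n ∈ Wcell q} (LMvF d) :=
  fun n n' => AddMonoidAlgebra.ofCoeff (Finsupp.single ((0 : Fin d →₀ ℤ), (0:ℤ))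
    (Vhat q V fun j => ((n.1 j - n'.1 j : ℤ) : ℝ) / (q j : ℝ)))

/-- `det(D^z + B - λI)`, a Laurent polynomial in `z` and `λ`. -/
def detLaur {d : ℕ} (q : Fin d → ℕ) (p : LMv d) (V : (Fin d → ℤ) → ℂ) : LMvF d :=
  Matrix.det (Dmat q p + Bmat q V - Matrix.diagonal fun _ => lamF d)
/-- Ordinary polynomials in `z₁,…,z_d` and `λ̃` (the extra `Unit` variable is `λ̃`). -/
abbrev MvP (d : ℕ) : Type := MvPolynomial (Fin d ⊕ Unit) ℂ

/-- Conversion of a Laurent polynomial in `(z,λ)` with nonnegative exponents into an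
ordinary polynomial in `ℂ[z₁,…,z_d,λ̃]` (negative exponents are truncated). -/
def toMvP {d : ℕ} (P : LMvF d) : MvP d :=
  Finsupp.sum P.coeff fun β c =>
    MvPolynomial.monomial
      (Finsupp.equivFunOnFinite.symm
        (Sum.elim (fun j => (β.1 j).toNat) (fun _ => β.2.toNat))) c

/-- `γ_j(p)`: minus the lowest exponent of `z_j` in `p` if that exponent is negative,
and `0` otherwise. -/
def gammaV {d : ℕ} (p : LMv d) (j : Fin d) : ℤ :=
  max 0 (-(WithTop.untopD 0 ((Finsupp.support p.coeff).image fun α => α j).min))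

/-- The exponent vector `γ' = (γ₁',…,γ_d')` computed from the lowest degree component of `p`. -/
def gammaE' {d : ℕ} (p : LMv d) : Fin d →₀ ℤ :=
  Finsupp.equivFunOnFinite.symm fun j => gammaV (lowComp p) j

/-- The polynomial `r_n(z,λ̃) = λ̃ z^{γ'} h(μ_n⊙z) − z^{γ'} ∈ ℂ[z,λ̃]`. -/
def rPoly {d : ℕ} (q : Fin d → ℕ) (p : LMv d) (n : Fin d → ℤ) : MvP d :=
  MvPolynomial.X (Sum.inr ()) *
      toMvP ((AddMonoidAlgebra.single (gammaE' p, (0:ℤ)) (1:ℂ) : LMvF d) * embedZ (scaleZ (muV q n) (lowComp p)))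
    - toMvP (AddMonoidAlgebra.ofCoeff (Finsupp.single (gammaE' p, (0:ℤ)) (1:ℂ)))

/-- Substitution `w_j ↦ z_j^{q_j}` (fixing `λ̃`) on ordinary polynomials. -/
def stretchMv {d : ℕ} (q : Fin d → ℕ) : MvP d →ₐ[ℂ] MvP d :=
  MvPolynomial.aeval
    (Sum.elim (fun j => MvPolynomial.X (Sum.inl j) ^ q j)
      (fun _ => MvPolynomial.X (Sum.inr ())))

/-- Substitution `z_j ↦ c_j z_j` (fixing `λ̃`) on ordinary polynomials. -/
def scaleMv {d : ℕ} (c : Fin d → ℂ) : MvP d →ₐ[ℂ] MvP d :=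
  MvPolynomial.aeval
    (Sum.elim (fun j => MvPolynomial.C (c j) * MvPolynomial.X (Sum.inl j))
      (fun _ => MvPolynomial.X (Sum.inr ())))

/-- `ã(z,λ̃) = ∏_{n∈W} r_n(z,λ̃)`. -/
def atilde {d : ℕ} (q : Fin d → ℕ) (p : LMv d) : MvP d := ∏ n ∈ Wcell q, rPoly q p n

/-- Substitution `λ ↦ λ̃⁻¹` on Laurent polynomials in `(z,λ)`. -/
def invLam {d : ℕ} (P : LMvF d) : LMvF d :=
  AddMonoidAlgebra.ofCoeff (Finsupp.mapDomain (fun β : (Fin d →₀ ℤ) × ℤ => (β.1, -β.2)) P.coeff)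

/-- The exponent vector `(γ₁ Q/q₁, …, γ_d Q/q_d)` computed from `p`. -/
def gammaQE {d : ℕ} (q : Fin d → ℕ) (p : LMv d) : Fin d →₀ ℤ :=
  Finsupp.equivFunOnFinite.symm fun j => gammaV p j * (((∏ i, q i) / q j : ℕ) : ℤ)

/-- `ℛ(w,λ̃) = λ̃^Q w₁^{γ₁Q/q₁}⋯w_d^{γ_dQ/q_d} 𝒫(w,λ̃⁻¹)`. -/
def Rcal {d : ℕ} (q : Fin d → ℕ) (p : LMv d) (P : LMvF d) : LMvF d :=
  (AddMonoidAlgebra.single (gammaQE q p, ((∏ j, q j : ℕ) : ℤ)) (1:ℂ) : LMvF d) * invLam P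
/-- Reduction of `v ∈ ℤ^d` modulo the lattice `q₁ℤ ⊕ ⋯ ⊕ q_dℤ` into `W`. -/
def modW {d : ℕ} (q : Fin d → ℕ) (hq : ∀ j, 1 ≤ q j) (v : Fin d → ℤ) :
    {x // x ∈ Wcell q} :=
  ⟨fun j => v j % (q j : ℤ), by
    simp only [Wcell, Fintype.mem_piFinset, Finset.mem_image, Finset.mem_range]
    intro j
    have h1 : (0:ℤ) < (q j : ℤ) := by exact_mod_cast hq j
    have h2 : v j % (q j : ℤ) < (q j : ℤ) := Int.emod_lt_of_pos _ h1
    have h3 : (0:ℤ) ≤ v j % (q j : ℤ) := Int.emod_nonneg _ (by omega)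
    exact ⟨(v j % (q j : ℤ)).toNat, by omega, by omega⟩⟩

/-- The extension `u^x` of `u : ℂ^W` to `ℤ^d` satisfying `u^x_{n+m⊙q} = e^{2πi⟨m⊙q,x⟩}u_n`. -/
def extFn {d : ℕ} (q : Fin d → ℕ) (hq : ∀ j, 1 ≤ q j) (x : Fin d → ℝ)
    (u : {n // n ∈ Wcell q} → ℂ) (v : Fin d → ℤ) : ℂ :=
  Complex.exp (2 * Real.pi * Complex.I *
      ∑ j, ((((v j / (q j : ℤ)) * (q j : ℤ) : ℤ) : ℂ) * ((x j : ℝ) : ℂ))) *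
    u (modW q hq v)

/-- The Floquet restriction `H̃(x)` of `H = A + V` to `ℂ^W`. -/
def HtildeFn {d : ℕ} (q : Fin d → ℕ) (hq : ∀ j, 1 ≤ q j) (x : Fin d → ℝ)
    (a : (Fin d → ℤ) →₀ ℂ) (V : (Fin d → ℤ) → ℂ)
    (u : {n // n ∈ Wcell q} → ℂ) : {n // n ∈ Wcell q} → ℂ :=
  fun m => (Finsupp.sum a fun k c => c * extFn q hq x u (fun j => m.1 j - k j)) + V m.1 * u m

/-- The matrix of `H̃(x)` in the standard basis of `ℂ^W`. -/
def Hmat {d : ℕ} (q : Fin d → ℕ) (hq : ∀ j, 1 ≤ q j) (x : Fin d → ℝ)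
    (a : (Fin d → ℤ) →₀ ℂ) (V : (Fin d → ℤ) → ℂ) :
    Matrix {n // n ∈ Wcell q} {n // n ∈ Wcell q} ℂ :=
  fun m n => HtildeFn q hq x a V (Pi.single n 1) m

/-- The Floquet–Bloch transform matrix `ℱ^x`. -/
def Fmat {d : ℕ} (q : Fin d → ℕ) (x : Fin d → ℝ) :
    Matrix {n // n ∈ Wcell q} {n // n ∈ Wcell q} ℂ :=
  fun l n => ((1 / Real.sqrt (∏ j, (q j : ℝ)) : ℝ) : ℂ) *
    Complex.exp (-(2 * Real.pi * Complex.I) *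
      ∑ j, ((((l.1 j : ℝ) / (q j : ℝ) + x j : ℝ) : ℂ) * ((n.1 j : ℤ) : ℂ)))

/-- Numerical evaluation of the symbol `p(z) = Σ_n a_n z^{-n}`. -/
def pEvalN {d : ℕ} (a : (Fin d → ℤ) →₀ ℂ) (z : Fin d → ℂ) : ℂ :=
  Finsupp.sum a fun n c => c * ∏ j, z j ^ (-(n j))

/-- The numerical diagonal matrix `D^z`, `z = e^{2πix}`, with entries `p(μ_n ⊙ z)`. -/
def DmatN {d : ℕ} (q : Fin d → ℕ) (x : Fin d → ℝ) (a : (Fin d → ℤ) →₀ ℂ) :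
    Matrix {n // n ∈ Wcell q} {n // n ∈ Wcell q} ℂ :=
  Matrix.diagonal fun n => pEvalN a fun j =>
    muC (q j) (n.1 j) * Complex.exp (2 * Real.pi * Complex.I * ((x j : ℝ) : ℂ))

/-- The numerical matrix `B`. -/
def BmatN {d : ℕ} (q : Fin d → ℕ) (V : (Fin d → ℤ) → ℂ) :
    Matrix {n // n ∈ Wcell q} {n // n ∈ Wcell q} ℂ :=
  fun n n' => Vhat q V fun j => ((n.1 j - n'.1 j : ℤ) : ℝ) / (q j : ℝ)

/-- The symbol of the discrete Laplacian: `p(z) = -(Σ_j z_j + z_j⁻¹)`. -/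
def pLap (d : ℕ) : LMv d :=
  - ∑ j : Fin d, ((AddMonoidAlgebra.single (Finsupp.single j (1:ℤ)) (1:ℂ) : LMv d)
      + (AddMonoidAlgebra.single (Finsupp.single j (-1:ℤ)) (1:ℂ) : LMv d))

/-- The exponent vector `(a, b) ∈ ℤ²`. -/
def ee2 (a b : ℤ) : Fin 2 →₀ ℤ := Finsupp.single 0 a + Finsupp.single 1 b

/-- The monomial `z₁^a z₂^b`. -/
def mono2 (a b : ℤ) : LMv 2 := AddMonoidAlgebra.single (ee2 a b) (1:ℂ)

/-- The symbol of the extended Harper lattice Laplacian. -/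
def pEHM : LMv 2 :=
  -(mono2 1 0 + mono2 (-1) 0 + mono2 0 1 + mono2 0 (-1)
    + mono2 1 (-1) + mono2 (-1) 1 + mono2 1 1 + mono2 (-1) (-1))

/-- The symbol of the (sheared) triangular lattice Laplacian. -/
def pTri : LMv 2 :=
  -(mono2 1 0 + mono2 (-1) 0 + mono2 0 1 + mono2 0 (-1) + mono2 1 (-1) + mono2 (-1) 1)


/-!
Each factor `p(μ_n⊙z) − λ` of `𝒫̃` has `λ`-degree at most `1` and `z_j`-exponents at least `−γ_j`,
so every monomial of `𝒫̃`, hence of `𝒫`, lies in the region where `ℛ` is a polynomial.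
The extreme values are attained by the full product over `W` only: for an additive grading `E`,
the lowest `E`-degree part of a product is the product of the lowest parts, which is nonzero as
`ℂ[ℤ^{d+1}]` is a domain, while a product over a proper subset `X ∈ 𝒮` starts in strictly higher
degree. For `−λ`-degree this gives the coefficient `(−1)^Q` of `λ^Q`, a monomial of `ℛ` free of
`λ̃` and of every `w_j` with `γ_j = 0`; for the `z_j`-degree with `γ_j > 0` it gives a monomial
of `𝒫` with `w_j`-exponent `−γ_j Q/q_j`, i.e. a monomial of `ℛ` free of `w_j`.
-/

namespace AddMonoidAlgebra

variable {k M ι : Type*} [CommSemiring k] [AddCommMonoid M] (E : M →+ ℤ)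

theorem add_le_of_mem_support_mul {f g : k[M]} {a b : ℤ}
    (hf : ∀ y ∈ f.coeff.support, a ≤ E y) (hg : ∀ z ∈ g.coeff.support, b ≤ E z) :
    ∀ x ∈ (f * g).coeff.support, a + b ≤ E x := by
  classical
  intro x hx
  obtain ⟨y, hy, z, hz, rfl⟩ := Finset.mem_add.mp (support_coeff_mul_subset f g hx)
  rw [map_add]
  exact add_le_add (hf y hy) (hg z hz)

theorem sum_le_of_mem_support_prod (s : Finset ι) (f : ι → k[M]) (m : ι → ℤ)
    (h : ∀ i ∈ s, ∀ x ∈ (f i).coeff.support, m i ≤ E x) :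
    ∀ x ∈ (∏ i ∈ s, f i).coeff.support, ∑ i ∈ s, m i ≤ E x := by
  classical
  induction s using Finset.induction_on with
  | empty =>
    intro x hx
    rw [Finset.prod_empty, one_def, coeff_single] at hx
    simp [Finset.mem_singleton.mp (Finsupp.support_single_subset hx)]
  | insert i s hi ih =>
    rw [Finset.prod_insert hi, Finset.sum_insert hi]
    exact add_le_of_mem_support_mul E (h i (Finset.mem_insert_self i s))
      (ih fun j hj => h j (Finset.mem_insert_of_mem hj))

def degreePart (a : ℤ) (f : k[M]) : k[M] :=
  ofCoeff (f.coeff.filter fun x => E x = a)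

theorem coeff_degreePart (a : ℤ) (f : k[M]) (x : M) :
    (degreePart E a f).coeff x = if E x = a then f.coeff x else 0 := by
  classical
  simp [degreePart, Finsupp.filter_apply]

theorem mem_support_degreePart {a : ℤ} {f : k[M]} {x : M} :
    x ∈ (degreePart E a f).coeff.support ↔ x ∈ f.coeff.support ∧ E x = a := by
  classical
  simp [degreePart, Finsupp.support_filter]

theorem degreePart_ne_zero_iff {a : ℤ} {f : k[M]} :
    degreePart E a f ≠ 0 ↔ ∃ x ∈ f.coeff.support, E x = a := by
  simp only [ne_eq, ← coeff_eq_zero, ← Finsupp.support_nonempty_iff, Finset.Nonempty,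
    mem_support_degreePart]

theorem degreePart_mul {f g : k[M]} {a b : ℤ}
    (hf : ∀ y ∈ f.coeff.support, a ≤ E y) (hg : ∀ z ∈ g.coeff.support, b ≤ E z) :
    degreePart E (a + b) (f * g) = degreePart E a f * degreePart E b g := by
  classical
  have hsub {c : ℤ} {u : k[M]} : (degreePart E c u).coeff.support ⊆ u.coeff.support :=
    fun y hy => ((mem_support_degreePart E).mp hy).1
  ext x
  rw [coeff_degreePart]
  split_ifs with hx
  · rw [coeff_mul, coeff_mul, Finsupp.sum_of_support_subset _ hsub _ (by simp)]
    refine Finset.sum_congr rfl fun y hy => ?_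
    rw [Finsupp.sum_of_support_subset _ hsub _ (by simp)]
    refine Finset.sum_congr rfl fun z hz => ?_
    dsimp only
    by_cases hyz : y + z = x
    · have hy' := hf y hy
      have hz' := hg z hz
      rw [← hyz, map_add] at hx
      simp [coeff_degreePart, hyz, show E y = a by omega, show E z = b by omega]
    · simp [hyz]
  · refine (Finsupp.notMem_support_iff.mp fun hmem => hx ?_).symm
    obtain ⟨y, hy, z, hz, rfl⟩ := Finset.mem_add.mp (support_coeff_mul_subset _ _ hmem)
    rw [map_add, ((mem_support_degreePart E).mp hy).2, ((mem_support_degreePart E).mp hz).2]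

theorem degreePart_prod (s : Finset ι) (f : ι → k[M]) (m : ι → ℤ)
    (h : ∀ i ∈ s, ∀ x ∈ (f i).coeff.support, m i ≤ E x) :
    degreePart E (∑ i ∈ s, m i) (∏ i ∈ s, f i) = ∏ i ∈ s, degreePart E (m i) (f i) := by
  classical
  induction s using Finset.induction_on with
  | empty =>
    ext x
    rcases eq_or_ne x 0 with rfl | hx
    · simp [coeff_degreePart, one_def]
    · simp [coeff_degreePart, one_def, hx.symm]
  | insert i s hi ih =>
    have hs : ∀ j ∈ s, ∀ x ∈ (f j).coeff.support, m j ≤ E x :=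
      fun j hj => h j (Finset.mem_insert_of_mem hj)
    rw [Finset.prod_insert hi, Finset.sum_insert hi, Finset.prod_insert hi,
      degreePart_mul E (h i (Finset.mem_insert_self i s)) (sum_le_of_mem_support_prod E s f m hs),
      ih hs]

end AddMonoidAlgebra

open AddMonoidAlgebra

section Ptilde

variable {d : ℕ}

theorem coeff_scaleZ (c : Fin d → ℂ) (p : LMv d) (α : Fin d →₀ ℤ) :
    (scaleZ c p).coeff α = (∏ j, c j ^ α j) * p.coeff α := by
  rw [scaleZ, coeff_ofCoeff, Finsupp.sum_apply, Finsupp.sum, Finset.sum_eq_single α]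
  · simp
  · exact fun β _ hne => Finsupp.single_eq_of_ne hne.symm
  · intro hα
    simp [Finsupp.notMem_support_iff.mp hα]

theorem coeff_scaleZ_muV_ne_zero (q : Fin d → ℕ) (n : Fin d → ℤ) {p : LMv d} {α : Fin d →₀ ℤ}
    (hα : α ∈ p.coeff.support) : (scaleZ (muV q n) p).coeff α ≠ 0 :=
  coeff_scaleZ _ p α ▸ mul_ne_zero
    (Finset.prod_ne_zero_iff.mpr fun _ _ => zpow_ne_zero _ (Complex.exp_ne_zero _))
    (Finsupp.mem_support_iff.mp hα)

theorem coeff_embedZ (h : LMv d) (α : Fin d →₀ ℤ) : (embedZ h).coeff (α, 0) = h.coeff α :=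
  Finsupp.mapDomain_apply (fun _ _ h => congrArg Prod.fst h) h.coeff α

theorem mem_support_embedZ {h : LMv d} {β : (Fin d →₀ ℤ) × ℤ}
    (hβ : β ∈ (embedZ h).coeff.support) : β.1 ∈ h.coeff.support ∧ β.2 = 0 := by
  obtain ⟨α, hα, rfl⟩ := Finset.mem_image.mp (Finsupp.mapDomain_support hβ)
  exact ⟨hα, rfl⟩

theorem lamF_eq : lamF d = single (0, 1) 1 := rfl

def shiftedFactor (q : Fin d → ℕ) (p : LMv d) (n : Fin d → ℤ) : LMvF d :=
  embedZ (scaleZ (muV q n) p) - lamF d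

theorem mem_support_shiftedFactor {q : Fin d → ℕ} {p : LMv d} {n : Fin d → ℤ}
    {β : (Fin d →₀ ℤ) × ℤ} (hβ : β ∈ (shiftedFactor q p n).coeff.support) :
    (β.1 ∈ p.coeff.support ∧ β.2 = 0) ∨ β = (0, 1) := by
  rcases Finset.mem_union.mp (Finsupp.support_sub hβ) with h | h
  · left
    obtain ⟨h1, h2⟩ := mem_support_embedZ h
    rw [Finsupp.mem_support_iff, coeff_scaleZ] at h1
    exact ⟨Finsupp.mem_support_iff.mpr (right_ne_zero_of_mul h1), h2⟩
  · right
    simpa [lamF_eq] using Finsupp.support_single_subset h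

theorem gammaV_nonneg (p : LMv d) (j : Fin d) : 0 ≤ gammaV p j := le_max_left _ _

theorem gammaV_eq_of_nonempty {p : LMv d} {j : Fin d}
    (hs : (p.coeff.support.image fun α => α j).Nonempty) :
    gammaV p j = max 0 (-(p.coeff.support.image fun α => α j).min' hs) := by
  rw [gammaV, ← Finset.coe_min' hs]
  rfl

theorem neg_gammaV_le {p : LMv d} (j : Fin d) {α : Fin d →₀ ℤ} (hα : α ∈ p.coeff.support) :
    -gammaV p j ≤ α j := by
  have hmem := Finset.mem_image_of_mem (fun α : Fin d →₀ ℤ => α j) hα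
  have hmin := Finset.min'_le _ _ hmem
  rw [gammaV_eq_of_nonempty ⟨_, hmem⟩]
  omega

theorem exists_eq_neg_gammaV {p : LMv d} {j : Fin d} (hγ : 0 < gammaV p j) :
    ∃ α ∈ p.coeff.support, α j = -gammaV p j := by
  by_cases hs : (p.coeff.support.image fun α => α j).Nonempty
  · obtain ⟨α, hα, hαj⟩ := Finset.mem_image.mp (Finset.min'_mem _ hs)
    rw [gammaV_eq_of_nonempty hs] at hγ ⊢
    exact ⟨α, hα, by omega⟩
  · rw [Finset.not_nonempty_iff_eq_empty] at hs
    simp [gammaV, hs] at hγ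

def zExp (j : Fin d) : (Fin d →₀ ℤ) × ℤ →+ ℤ :=
  (Finsupp.applyAddHom j).comp (AddMonoidHom.fst _ _)

@[simp] theorem zExp_apply (j : Fin d) (β : (Fin d →₀ ℤ) × ℤ) : zExp j β = β.1 j := rfl

theorem neg_gammaV_le_zExp_shiftedFactor (q : Fin d → ℕ) (p : LMv d) (j : Fin d) :
    ∀ n, ∀ β ∈ (shiftedFactor q p n).coeff.support, -gammaV p j ≤ zExp j β := by
  intro n β hβ
  rcases mem_support_shiftedFactor hβ with ⟨hβ, -⟩ | rfl
  · exact neg_gammaV_le j hβ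
  · simpa using gammaV_nonneg p j

theorem degreePart_zExp_shiftedFactor_ne_zero (q : Fin d → ℕ) {p : LMv d} (n : Fin d → ℤ)
    {j : Fin d} (hγ : 0 < gammaV p j) :
    degreePart (zExp j) (-gammaV p j) (shiftedFactor q p n) ≠ 0 := by
  obtain ⟨α, hα, hαj⟩ := exists_eq_neg_gammaV hγ
  refine (degreePart_ne_zero_iff _).mpr ⟨(α, 0), Finsupp.mem_support_iff.mpr ?_, hαj⟩
  have hlam : (lamF d).coeff (α, 0) = 0 := by simp [lamF_eq]
  rw [shiftedFactor, coeff_sub, Finsupp.sub_apply, coeff_embedZ, hlam, sub_zero]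
  exact coeff_scaleZ_muV_ne_zero q n hα

theorem neg_one_le_neg_snd_shiftedFactor (q : Fin d → ℕ) (p : LMv d) :
    ∀ n, ∀ β ∈ (shiftedFactor q p n).coeff.support, -1 ≤ (-AddMonoidHom.snd _ _) β := by
  intro n β hβ
  rcases mem_support_shiftedFactor hβ with ⟨-, h⟩ | rfl <;> simp [*]

theorem degreePart_neg_snd_shiftedFactor (q : Fin d → ℕ) (p : LMv d) (n : Fin d → ℤ) :
    degreePart (-AddMonoidHom.snd _ _) (-1) (shiftedFactor q p n) = single (0, 1) (-1) := by
  ext β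
  rw [coeff_degreePart, shiftedFactor, coeff_sub, Finsupp.sub_apply, lamF_eq]
  by_cases h : β.2 = 1
  · have hemb : (embedZ (scaleZ (muV q n) p)).coeff β = 0 :=
      Finsupp.notMem_support_iff.mp fun hm => by simp [(mem_support_embedZ hm).2] at h
    by_cases hβ : β = (0, 1)
    · subst hβ
      simp [hemb]
    · simp [h, hemb, Ne.symm hβ]
  · have hβ : β ≠ (0, 1) := fun e => h (by simp [e])
    simp [h, Ne.symm hβ]

theorem Ptilde_eq (q : Fin d → ℕ) (p : LMv d) (S : Finset (Finset (Fin d → ℤ)))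
    (C : Finset (Fin d → ℤ) → ℂ) :
    Ptilde q p S C = (∏ n ∈ Wcell q, shiftedFactor q p n)
      + ∑ X ∈ S, C X • ∏ n ∈ X, shiftedFactor q p n := rfl

theorem card_mul_le_of_mem_support_prod (E : (Fin d →₀ ℤ) × ℤ →+ ℤ) {q : Fin d → ℕ}
    {p : LMv d} {m : ℤ} (hm : ∀ n, ∀ β ∈ (shiftedFactor q p n).coeff.support, m ≤ E β)
    (X : Finset (Fin d → ℤ)) :
    ∀ β ∈ (∏ n ∈ X, shiftedFactor q p n).coeff.support, X.card * m ≤ E β := by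
  simpa using sum_le_of_mem_support_prod E X (shiftedFactor q p) (fun _ => m) fun n _ => hm n

theorem degreePart_prod_shiftedFactor (E : (Fin d →₀ ℤ) × ℤ →+ ℤ) {q : Fin d → ℕ}
    {p : LMv d} {m : ℤ} (hm : ∀ n, ∀ β ∈ (shiftedFactor q p n).coeff.support, m ≤ E β)
    (X : Finset (Fin d → ℤ)) :
    degreePart E (X.card * m) (∏ n ∈ X, shiftedFactor q p n)
      = ∏ n ∈ X, degreePart E m (shiftedFactor q p n) := by
  simpa using degreePart_prod E X (shiftedFactor q p) (fun _ => m) fun n _ => hm n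

theorem support_Ptilde_subset (q : Fin d → ℕ) (p : LMv d) (S : Finset (Finset (Fin d → ℤ)))
    (C : Finset (Fin d → ℤ) → ℂ) :
    (Ptilde q p S C).coeff.support ⊆ (∏ n ∈ Wcell q, shiftedFactor q p n).coeff.support ∪
      S.biUnion fun X => (∏ n ∈ X, shiftedFactor q p n).coeff.support := by
  rw [Ptilde_eq, coeff_add]
  refine Finsupp.support_add.trans (Finset.union_subset_union subset_rfl ?_)
  rw [coeff_sum]
  refine Finsupp.support_finsetSum.trans (Finset.biUnion_mono fun X _ => ?_)
  rw [coeff_smul]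
  exact Finsupp.support_smul

theorem le_of_mem_support_Ptilde {q : Fin d → ℕ} {p : LMv d} {S : Finset (Finset (Fin d → ℤ))}
    (hS : ∀ X ∈ S, X ⊂ Wcell q) (C : Finset (Fin d → ℤ) → ℂ) (E : (Fin d →₀ ℤ) × ℤ →+ ℤ)
    {m : ℤ} (hm0 : m ≤ 0) (hm : ∀ n, ∀ β ∈ (shiftedFactor q p n).coeff.support, m ≤ E β) :
    ∀ β ∈ (Ptilde q p S C).coeff.support, (Wcell q).card * m ≤ E β := by
  intro β hβ
  rcases Finset.mem_union.mp (support_Ptilde_subset q p S C hβ) with hβ | hβ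
  · exact card_mul_le_of_mem_support_prod E hm _ β hβ
  · obtain ⟨X, hX, hβ⟩ := Finset.mem_biUnion.mp hβ
    have hcard : (X.card : ℤ) ≤ (Wcell q).card := by exact_mod_cast Finset.card_le_card (hS X hX).1
    nlinarith [card_mul_le_of_mem_support_prod E hm X β hβ]

theorem coeff_Ptilde_eq_coeff_degreePart {q : Fin d → ℕ} {p : LMv d}
    {S : Finset (Finset (Fin d → ℤ))} (hS : ∀ X ∈ S, X ⊂ Wcell q) (C : Finset (Fin d → ℤ) → ℂ)
    (E : (Fin d →₀ ℤ) × ℤ →+ ℤ) {m : ℤ} (hm0 : m < 0)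
    (hm : ∀ n, ∀ β ∈ (shiftedFactor q p n).coeff.support, m ≤ E β)
    {β : (Fin d →₀ ℤ) × ℤ} (hβ : E β = (Wcell q).card * m) :
    (Ptilde q p S C).coeff β
      = (degreePart E ((Wcell q).card * m) (∏ n ∈ Wcell q, shiftedFactor q p n)).coeff β := by
  rw [coeff_degreePart, if_pos hβ, Ptilde_eq, coeff_add, Finsupp.add_apply, coeff_sum,
    Finsupp.finsetSum_apply, Finset.sum_eq_zero, add_zero]
  intro X hX
  have hcard : (X.card : ℤ) < (Wcell q).card := by exact_mod_cast Finset.card_lt_card (hS X hX)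
  have hβX : β ∉ (∏ n ∈ X, shiftedFactor q p n).coeff.support := fun hβX => by
    nlinarith [card_mul_le_of_mem_support_prod E hm X β hβX]
  rw [coeff_smul, Finsupp.smul_apply, Finsupp.notMem_support_iff.mp hβX, smul_zero]

theorem coeff_Ptilde_zero_card {q : Fin d → ℕ} (p : LMv d) {S : Finset (Finset (Fin d → ℤ))}
    (hS : ∀ X ∈ S, X ⊂ Wcell q) (C : Finset (Fin d → ℤ) → ℂ) :
    (Ptilde q p S C).coeff (0, (Wcell q).card) = (-1) ^ (Wcell q).card := by
  have hm := neg_one_le_neg_snd_shiftedFactor q p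
  rw [coeff_Ptilde_eq_coeff_degreePart hS C _ neg_one_lt_zero hm (by simp),
    degreePart_prod_shiftedFactor _ hm,
    Finset.prod_congr rfl fun n _ => degreePart_neg_snd_shiftedFactor q p n, prod_single]
  simp

theorem exists_mem_support_Ptilde_zExp_eq {q : Fin d → ℕ} {p : LMv d}
    {S : Finset (Finset (Fin d → ℤ))} (hS : ∀ X ∈ S, X ⊂ Wcell q) (C : Finset (Fin d → ℤ) → ℂ)
    {j : Fin d} (hγ : 0 < gammaV p j) :
    ∃ β ∈ (Ptilde q p S C).coeff.support, β.1 j = (Wcell q).card * -gammaV p j := by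
  have hm := neg_gammaV_le_zExp_shiftedFactor q p j
  have hne : degreePart (zExp j) ((Wcell q).card * -gammaV p j)
      (∏ n ∈ Wcell q, shiftedFactor q p n) ≠ 0 := by
    rw [degreePart_prod_shiftedFactor _ hm]
    exact Finset.prod_ne_zero_iff.mpr fun n _ => degreePart_zExp_shiftedFactor_ne_zero q n hγ
  obtain ⟨β, hβ, hβj⟩ := (degreePart_ne_zero_iff _).mp hne
  refine ⟨β, Finsupp.mem_support_iff.mpr ?_, hβj⟩
  rw [coeff_Ptilde_eq_coeff_degreePart hS C _ (by omega) hm hβj, coeff_degreePart, if_pos hβj]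
  exact Finsupp.mem_support_iff.mp hβ

end Ptilde

section Stretch

variable {d : ℕ}

theorem stretchE_apply (q : Fin d → ℕ) (α : Fin d →₀ ℤ) (j : Fin d) :
    stretchE q α j = q j * α j := by
  rw [stretchE, Finsupp.sum_apply, Finsupp.sum, Finset.sum_eq_single j]
  · simp
  · exact fun i _ hij => Finsupp.single_eq_of_ne hij.symm
  · intro hj
    simp [Finsupp.notMem_support_iff.mp hj]

theorem stretchE_injective {q : Fin d → ℕ} (hq : ∀ j, 1 ≤ q j) :
    Function.Injective (stretchE q) := fun α α' h => by
  ext j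
  have hj := DFunLike.congr_fun h j
  rw [stretchE_apply, stretchE_apply] at hj
  exact mul_left_cancel₀ (by have := hq j; positivity) hj

theorem coeff_stretchF {q : Fin d → ℕ} (hq : ∀ j, 1 ≤ q j) (P : LMvF d) (α : Fin d →₀ ℤ)
    (k : ℤ) : (stretchF q P).coeff (stretchE q α, k) = P.coeff (α, k) :=
  Finsupp.mapDomain_apply (Prod.map_injective.mpr ⟨stretchE_injective hq, Function.injective_id⟩)
    P.coeff (α, k)

theorem exists_of_mem_support_stretchF {q : Fin d → ℕ} {P : LMvF d} {β : (Fin d →₀ ℤ) × ℤ}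
    (hβ : β ∈ (stretchF q P).coeff.support) :
    ∃ β' ∈ P.coeff.support, β = (stretchE q β'.1, β'.2) := by
  obtain ⟨β', hβ', rfl⟩ := Finset.mem_image.mp (Finsupp.mapDomain_support hβ)
  exact ⟨β', hβ', rfl⟩

theorem card_Wcell (q : Fin d → ℕ) : (Wcell q).card = ∏ j, q j := by
  rw [Wcell, Fintype.card_piFinset]
  exact Finset.prod_congr rfl fun j _ =>
    (Finset.card_image_of_injective _ Nat.cast_injective).trans (Finset.card_range _)

theorem mul_gammaQE (q : Fin d → ℕ) (p : LMv d) (j : Fin d) :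
    (q j : ℤ) * gammaQE q p j = (∏ i, q i : ℕ) * gammaV p j := by
  have hdvd := congrArg (Nat.cast : ℕ → ℤ)
    (Nat.mul_div_cancel' (Finset.dvd_prod_of_mem q (Finset.mem_univ j)))
  rw [Nat.cast_mul] at hdvd
  simp only [gammaQE, Finsupp.coe_equivFunOnFinite_symm]
  rw [← hdvd]
  ring

variable {q : Fin d → ℕ} {p : LMv d} {S : Finset (Finset (Fin d → ℤ))}
  {C : Finset (Fin d → ℤ) → ℂ} {P : LMvF d}

theorem mem_support_Ptilde_of_stretchF_eq (hq : ∀ j, 1 ≤ q j) (hP : stretchF q P = Ptilde q p S C)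
    {β : (Fin d →₀ ℤ) × ℤ} (hβ : β ∈ P.coeff.support) :
    (stretchE q β.1, β.2) ∈ (Ptilde q p S C).coeff.support := by
  rw [Finsupp.mem_support_iff, ← hP, coeff_stretchF hq]
  exact Finsupp.mem_support_iff.mp hβ

theorem snd_le_of_stretchF_eq (hq : ∀ j, 1 ≤ q j) (hS : ∀ X ∈ S, X ⊂ Wcell q)
    (hP : stretchF q P = Ptilde q p S C) :
    ∀ β ∈ P.coeff.support, β.2 ≤ (∏ j, q j : ℕ) := by
  intro β hβ
  have := le_of_mem_support_Ptilde hS C _ (by norm_num)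
    (neg_one_le_neg_snd_shiftedFactor q p) _
    (mem_support_Ptilde_of_stretchF_eq hq hP hβ)
  rw [card_Wcell] at this
  simpa using this

theorem neg_gammaQE_le_of_stretchF_eq (hq : ∀ j, 1 ≤ q j) (hS : ∀ X ∈ S, X ⊂ Wcell q)
    (hP : stretchF q P = Ptilde q p S C) (j : Fin d) :
    ∀ β ∈ P.coeff.support, -gammaQE q p j ≤ β.1 j := by
  intro β hβ
  have := le_of_mem_support_Ptilde hS C (zExp j) (neg_nonpos.mpr (gammaV_nonneg p j))
    (neg_gammaV_le_zExp_shiftedFactor q p j) _ (mem_support_Ptilde_of_stretchF_eq hq hP hβ)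
  rw [card_Wcell, zExp_apply, stretchE_apply] at this
  have hqj : (0 : ℤ) < q j := by have := hq j; positivity
  refine le_of_mul_le_mul_left ?_ hqj
  linarith [mul_gammaQE q p j]

theorem coeff_zero_prod_of_stretchF_eq (hq : ∀ j, 1 ≤ q j) (hS : ∀ X ∈ S, X ⊂ Wcell q)
    (hP : stretchF q P = Ptilde q p S C) :
    P.coeff (0, (∏ j, q j : ℕ)) = (-1) ^ ∏ j, q j := by
  rw [← coeff_stretchF hq, hP, ← card_Wcell, ← coeff_Ptilde_zero_card p hS C]
  simp [stretchE]

theorem exists_mem_support_eq_neg_gammaQE (hq : ∀ j, 1 ≤ q j) (hS : ∀ X ∈ S, X ⊂ Wcell q)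
    (hP : stretchF q P = Ptilde q p S C) {j : Fin d} (hγ : 0 < gammaV p j) :
    ∃ β ∈ P.coeff.support, β.1 j = -gammaQE q p j := by
  obtain ⟨β, hβ, hβj⟩ := exists_mem_support_Ptilde_zExp_eq hS C hγ
  rw [← hP] at hβ
  obtain ⟨β', hβ', rfl⟩ := exists_of_mem_support_stretchF hβ
  refine ⟨β', hβ', mul_left_cancel₀ (by have := hq j; positivity : (q j : ℤ) ≠ 0) ?_⟩
  rw [← stretchE_apply, hβj, card_Wcell]
  linarith [mul_gammaQE q p j]

end Stretch

section Rcal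

variable {d : ℕ}

theorem coeff_Rcal (q : Fin d → ℕ) (p : LMv d) (P : LMvF d) (β : (Fin d →₀ ℤ) × ℤ) :
    (Rcal q p P).coeff β = P.coeff (β.1 - gammaQE q p, (∏ j, q j : ℕ) - β.2) := by
  rw [Rcal, coeff_single_mul_apply, one_mul, invLam, coeff_ofCoeff]
  have hinj : Function.Injective fun β : (Fin d →₀ ℤ) × ℤ => (β.1, -β.2) :=
    Prod.map_injective.mpr ⟨Function.injective_id, neg_injective⟩
  convert Finsupp.mapDomain_apply hinj P.coeff (β.1 - gammaQE q p, (∏ j, q j : ℕ) - β.2) using 2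
  ext <;> simp [sub_eq_neg_add]

theorem nonneg_of_mem_support_Rcal {q : Fin d → ℕ} {p : LMv d} {P : LMvF d}
    (hsnd : ∀ β ∈ P.coeff.support, β.2 ≤ (∏ j, q j : ℕ))
    (hfst : ∀ j, ∀ β ∈ P.coeff.support, -gammaQE q p j ≤ β.1 j) :
    ∀ β ∈ (Rcal q p P).coeff.support, (∀ j, 0 ≤ β.1 j) ∧ 0 ≤ β.2 := by
  intro β hβ
  rw [Finsupp.mem_support_iff, coeff_Rcal, ← Finsupp.mem_support_iff] at hβ
  refine ⟨fun j => ?_, by linarith [hsnd _ hβ]⟩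
  have := hfst j _ hβ
  simp only [Finsupp.coe_sub, Pi.sub_apply] at this
  linarith

def natExp (β : (Fin d →₀ ℤ) × ℤ) : Fin d ⊕ Unit →₀ ℕ :=
  Finsupp.equivFunOnFinite.symm (Sum.elim (fun j => (β.1 j).toNat) fun _ => β.2.toNat)

theorem coeff_natExp_toMvP {R : LMvF d}
    (hR : ∀ β ∈ R.coeff.support, (∀ j, 0 ≤ β.1 j) ∧ 0 ≤ β.2) {β : (Fin d →₀ ℤ) × ℤ}
    (hβ : β ∈ R.coeff.support) : (toMvP R).coeff (natExp β) = R.coeff β := by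
  classical
  rw [show toMvP R = R.coeff.sum fun β c => MvPolynomial.monomial (natExp β) c from rfl,
    Finsupp.sum, MvPolynomial.coeff_sum, Finset.sum_eq_single β]
  · rw [MvPolynomial.coeff_monomial, if_pos rfl]
  · intro β' hβ' hne
    rw [MvPolynomial.coeff_monomial]
    refine if_neg fun h => hne ?_
    have h' := Finsupp.equivFunOnFinite.symm.injective h
    obtain ⟨hβ'1, hβ'2⟩ := hR β' hβ'
    obtain ⟨hβ1, hβ2⟩ := hR β hβ
    refine Prod.ext (Finsupp.ext fun j => ?_) ?_
    · have := congrFun h' (Sum.inl j)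
      simp only [Sum.elim_inl] at this
      have := hβ'1 j
      have := hβ1 j
      omega
    · have := congrFun h' (Sum.inr ())
      simp only [Sum.elim_inr] at this
      omega
  · exact fun h => absurd hβ h

theorem MvPolynomial.not_X_dvd_of_coeff_ne_zero {σ R : Type*} [CommSemiring R]
    {f : MvPolynomial σ R} {i : σ} {m : σ →₀ ℕ} (hm : m i = 0) (hf : f.coeff m ≠ 0) :
    ¬ MvPolynomial.X i ∣ f := by
  classical
  rintro ⟨g, rfl⟩
  rw [mul_comm, MvPolynomial.coeff_mul_X', if_neg (by simpa using hm)] at hf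
  exact hf rfl

theorem not_X_dvd_toMvP {R : LMvF d} (hR : ∀ β ∈ R.coeff.support, (∀ j, 0 ≤ β.1 j) ∧ 0 ≤ β.2)
    {β : (Fin d →₀ ℤ) × ℤ} (hβ : β ∈ R.coeff.support) {i : Fin d ⊕ Unit}
    (hi : natExp β i = 0) : ¬ MvPolynomial.X i ∣ toMvP R :=
  MvPolynomial.not_X_dvd_of_coeff_ne_zero hi
    (coeff_natExp_toMvP hR hβ ▸ Finsupp.mem_support_iff.mp hβ)

end Rcal

theorem stmt10_general {d : ℕ} (q : Fin d → ℕ) (hq : ∀ j, 1 ≤ q j)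
    (p : LMv d)
    (S : Finset (Finset (Fin d → ℤ))) (hS : ∀ X ∈ S, X ⊂ Wcell q)
    (C : Finset (Fin d → ℤ) → ℂ)
    (P : LMvF d) (hP : stretchF q P = Ptilde q p S C) :
    (∀ β ∈ Finsupp.support (Rcal q p P).coeff, (∀ j, 0 ≤ β.1 j) ∧ 0 ≤ β.2) ∧
    ¬ (MvPolynomial.X (Sum.inr ()) ∣ toMvP (Rcal q p P)) ∧
    (∀ j : Fin d, ¬ (MvPolynomial.X (Sum.inl j) ∣ toMvP (Rcal q p P))) := by
  have hnonneg := nonneg_of_mem_support_Rcal (snd_le_of_stretchF_eq hq hS hP)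
    (neg_gammaQE_le_of_stretchF_eq hq hS hP)
  have htop : (gammaQE q p, 0) ∈ (Rcal q p P).coeff.support := by
    rw [Finsupp.mem_support_iff, coeff_Rcal, sub_self, sub_zero,
      coeff_zero_prod_of_stretchF_eq hq hS hP]
    exact pow_ne_zero _ (neg_ne_zero.mpr one_ne_zero)
  refine ⟨hnonneg, not_X_dvd_toMvP hnonneg htop (by simp [natExp]), fun j => ?_⟩
  rcases (gammaV_nonneg p j).eq_or_lt with hγ | hγ
  · exact not_X_dvd_toMvP hnonneg htop (by simp [natExp, gammaQE, ← hγ])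
  · obtain ⟨β, hβ, hβj⟩ := exists_mem_support_eq_neg_gammaQE hq hS hP hγ
    refine not_X_dvd_toMvP hnonneg (β := (β.1 + gammaQE q p, (∏ j, q j : ℕ) - β.2)) ?_
      (by simp [natExp, hβj])
    rw [Finsupp.mem_support_iff, coeff_Rcal]
    simpa using hβ

theorem stmt10 {d : ℕ} (hd : 1 ≤ d) (q : Fin d → ℕ) (hq : ∀ j, 1 ≤ q j)
    (p : LMv d) (hp : p ≠ 0)
    (S : Finset (Finset (Fin d → ℤ))) (hS : ∀ X ∈ S, X ⊂ Wcell q)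
    (C : Finset (Fin d → ℤ) → ℂ)
    (hinv : ∀ n ∈ Wcell q, scaleZF (muV q n) (Ptilde q p S C) = Ptilde q p S C)
    (P : LMvF d) (hP : stretchF q P = Ptilde q p S C) :
    (∀ β ∈ Finsupp.support (Rcal q p P).coeff, (∀ j, 0 ≤ β.1 j) ∧ 0 ≤ β.2) ∧
    ¬ (MvPolynomial.X (Sum.inr ()) ∣ toMvP (Rcal q p P)) ∧
    (∀ j : Fin d, ¬ (MvPolynomial.X (Sum.inl j) ∣ toMvP (Rcal q p P))) :=
  stmt10_general q hq p S hS C P hP
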